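/- In H = H_{p,t,s} with t > s, suppose k ∈ (Z/p^{t-s}Z)* satisfies k² - k + 1 ≡ 0 (mod p^{t-s}). Then the elements x = a⁻¹ b a^k and y = a⁻¹ (a⁻¹ b a^k)^(-k) satisfy o(x) = p^t, o(y) = p^s, and ⟨x, y⟩ = H; consequently H has an automorphism sending (a, b) to (x, y). -/

import Mathlib

open scoped commutatorElement

/-- Relations for the inner-abelian non-metacyclic p-group
`H_{p,t,s} = ⟨a, b, c | a^(p^t) = b^(p^s) = c^p = 1, [a,b] = c, [c,a] = [c,b] = 1⟩`. -/
def HRels (p t s : ℕ) : Set (FreeGroup (Fin 3)) :=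
  {FreeGroup.of (0 : Fin 3) ^ p ^ t, FreeGroup.of (1 : Fin 3) ^ p ^ s, FreeGroup.of (2 : Fin 3) ^ p,
   ⁅FreeGroup.of (0 : Fin 3), FreeGroup.of (1 : Fin 3)⁆ * (FreeGroup.of (2 : Fin 3))⁻¹,
   ⁅FreeGroup.of (2 : Fin 3), FreeGroup.of (0 : Fin 3)⁆, ⁅FreeGroup.of (2 : Fin 3), FreeGroup.of (1 : Fin 3)⁆}

/-- The group `H_{p,t,s}` as a presented group. -/
abbrev Hgrp (p t s : ℕ) := PresentedGroup (HRels p t s)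

/-- The generator `a` of `H_{p,t,s}`. -/
def aa (p t s : ℕ) : Hgrp p t s := PresentedGroup.of (0 : Fin 3)

/-- The generator `b` of `H_{p,t,s}`. -/
def bb (p t s : ℕ) : Hgrp p t s := PresentedGroup.of (1 : Fin 3)

/-- The generator `c = [a,b]` of `H_{p,t,s}`. -/
def cc (p t s : ℕ) : Hgrp p t s := PresentedGroup.of (2 : Fin 3)

/-!
`H` embeds into the group of triples `(x, y, z) ∈ ℤ/p^t × ℤ/p^s × ℤ/p` multiplied according to the
collection formula for `a^x b^y c^z`: `a ↦ (1,0,0)`, `b ↦ (0,1,0)` respects the relations, and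
the map is injective because every element of `H` has a normal form `a^m b^n c^q`. For odd `p`
and `e ≥ 1` a triple `u` satisfies `u^(p^e) = (p^e x, p^e y, 0)`, since `p` divides
`(p^e).choose 2`, so orders are read off the first two coordinates. The image of `x` is
`(k - 1, 1, -k)`, of order `p^t` because `p ∤ k - 1`; the image of `y` is
`(-(k² - k + 1), -k, _)`, of order `p^s` because `p^(t-s) ∣ k² - k + 1` and `p ∤ k`. Both `a` and
`b` are words in `x` and `y`, so these generate `H`. Finally `a ↦ x`, `b ↦ y` respects the
defining relations (commutators in `H` are central of order `p`), so it extends to a surjective,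
hence bijective, endomorphism of the finite group `H`.
-/

section

variable {G : Type*} [Group G] {a b c : G}

theorem zpow_mul_zpow_of_commutatorElement_eq (hab : ⁅a, b⁆ = c) (hca : Commute c a)
    (hcb : Commute c b) (m n : ℤ) : b ^ n * a ^ m = a ^ m * b ^ n * c ^ (-(n * m)) := by
  have hb : SemiconjBy a b (c * b) := by
    rw [SemiconjBy, ← hab, commutatorElement_def]; group
  have hbn : SemiconjBy a (b ^ n) (c ^ n * b ^ n) := by
    simpa only [hcb.mul_zpow] using hb.zpow_right n
  have ha : SemiconjBy (b ^ n) a ((c ^ n)⁻¹ * a) := by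
    rw [SemiconjBy, mul_assoc, hbn.eq]; group
  rw [(ha.zpow_right m).eq, ((hca.zpow_left n).inv_left).mul_zpow, ← zpow_neg, ← zpow_mul,
    neg_mul, mul_assoc, ((hca.zpow_zpow _ _).mul_right (hcb.zpow_zpow _ _)).eq]

theorem collection_mul (hab : ⁅a, b⁆ = c) (hca : Commute c a) (hcb : Commute c b)
    (m₁ n₁ q₁ m₂ n₂ q₂ : ℤ) :
    a ^ m₁ * b ^ n₁ * c ^ q₁ * (a ^ m₂ * b ^ n₂ * c ^ q₂) =
      a ^ (m₁ + m₂) * b ^ (n₁ + n₂) * c ^ (q₁ + q₂ - n₁ * m₂) := by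
  have hc₁ : Commute (c ^ q₁) (a ^ m₂ * b ^ n₂) :=
    (hca.zpow_zpow _ _).mul_right (hcb.zpow_zpow _ _)
  have hc₂ : Commute (c ^ (-(n₁ * m₂))) (b ^ n₂) := hcb.zpow_zpow _ _
  calc _ = a ^ m₁ * (b ^ n₁ * a ^ m₂) * b ^ n₂ * (c ^ q₁ * c ^ q₂) := by
        rw [hc₁.mul_mul_mul_comm]; group
    _ = a ^ m₁ * a ^ m₂ * b ^ n₁ * (c ^ (-(n₁ * m₂)) * b ^ n₂) * (c ^ q₁ * c ^ q₂) := by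
        rw [zpow_mul_zpow_of_commutatorElement_eq hab hca hcb]; group
    _ = _ := by
        rw [hc₂.eq]; group

theorem exists_eq_zpow_mul_zpow_mul_zpow (hab : ⁅a, b⁆ = c) (hca : Commute c a)
    (hcb : Commute c b) {g : G} (hg : g ∈ Subgroup.closure {a, b}) :
    ∃ m n q : ℤ, g = a ^ m * b ^ n * c ^ q := by
  let S : Subgroup G :=
    { carrier := {g | ∃ m n q : ℤ, g = a ^ m * b ^ n * c ^ q}
      mul_mem' := by
        rintro _ _ ⟨m₁, n₁, q₁, rfl⟩ ⟨m₂, n₂, q₂, rfl⟩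
        exact ⟨_, _, _, collection_mul hab hca hcb ..⟩
      one_mem' := ⟨0, 0, 0, by simp⟩
      inv_mem' := by
        rintro _ ⟨m, n, q, rfl⟩
        refine ⟨-m, -n, -q - n * m, inv_eq_of_mul_eq_one_right ?_⟩
        rw [collection_mul hab hca hcb]; group }
  have hab_mem : {a, b} ⊆ (S : Set G) := by
    rintro _ (rfl | rfl)
    exacts [⟨1, 0, 0, by simp⟩, ⟨0, 1, 0, by simp⟩]
  exact (Subgroup.closure_le S).2 hab_mem hg

end

theorem zpow_eq_one_of_intCast_eq_zero {G : Type*} [Group G] {g : G} {N : ℕ} (hg : g ^ N = 1)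
    {m : ℤ} (hm : (m : ZMod N) = 0) : g ^ m = 1 := by
  obtain ⟨d, rfl⟩ := (ZMod.intCast_zmod_eq_zero_iff_dvd m N).1 hm
  rw [zpow_mul, zpow_natCast, hg, one_zpow]

theorem ZMod.natCast_pow_mul_intCast_ne_zero {p : ℕ} (hp : p ≠ 0) {m : ℤ} (hm : ¬ (p : ℤ) ∣ m)
    (e : ℕ) : (p : ZMod (p ^ (e + 1))) ^ e * m ≠ 0 := by
  rw [← Int.cast_natCast, ← Int.cast_pow, ← Int.cast_mul, Ne, ZMod.intCast_zmod_eq_zero_iff_dvd,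
    Nat.cast_pow, pow_succ, mul_dvd_mul_iff_left (pow_ne_zero e (Int.natCast_ne_zero.2 hp))]
  exact hm

theorem not_dvd_sub_one_of_dvd_sq_sub_add_one {q k : ℤ} (hq : ¬ IsUnit q)
    (h : q ∣ k ^ 2 - k + 1) : ¬ q ∣ k - 1 := fun h₁ ↦
  hq <| isUnit_of_dvd_one <| (dvd_add_right (dvd_mul_of_dvd_right h₁ k)).1 <| by
    rwa [show k * (k - 1) + 1 = k ^ 2 - k + 1 by ring]

namespace Hgrp

variable {p t s : ℕ}

theorem aa_pow : aa p t s ^ p ^ t = 1 := by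
  have := PresentedGroup.one_of_mem (rels := HRels p t s) (Or.inl rfl)
  rwa [map_pow] at this

theorem bb_pow : bb p t s ^ p ^ s = 1 := by
  have := PresentedGroup.one_of_mem (rels := HRels p t s) (Or.inr <| Or.inl rfl)
  rwa [map_pow] at this

theorem cc_pow : cc p t s ^ p = 1 := by
  have := PresentedGroup.one_of_mem (rels := HRels p t s) (Or.inr <| Or.inr <| Or.inl rfl)
  rwa [map_pow] at this

theorem commutatorElement_aa_bb : ⁅aa p t s, bb p t s⁆ = cc p t s := by
  have := PresentedGroup.one_of_mem (rels := HRels p t s)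
    (Or.inr <| Or.inr <| Or.inr <| Or.inl rfl)
  rw [map_mul, map_inv, map_commutatorElement] at this
  exact eq_of_mul_inv_eq_one this

theorem commute_cc_aa : Commute (cc p t s) (aa p t s) := by
  have := PresentedGroup.one_of_mem (rels := HRels p t s)
    (Or.inr <| Or.inr <| Or.inr <| Or.inr <| Or.inl rfl)
  rwa [map_commutatorElement, commutatorElement_eq_one_iff_commute] at this

theorem commute_cc_bb : Commute (cc p t s) (bb p t s) := by
  have := PresentedGroup.one_of_mem (rels := HRels p t s)
    (Or.inr <| Or.inr <| Or.inr <| Or.inr <| Or.inr rfl)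
  rwa [map_commutatorElement, commutatorElement_eq_one_iff_commute] at this

theorem closure_aa_bb : Subgroup.closure {aa p t s, bb p t s} = ⊤ := by
  set K := Subgroup.closure {aa p t s, bb p t s}
  have ha : aa p t s ∈ K := Subgroup.subset_closure (by simp)
  have hb : bb p t s ∈ K := Subgroup.subset_closure (by simp)
  have hc : cc p t s ∈ K := by
    rw [← commutatorElement_aa_bb, commutatorElement_def]
    exact K.mul_mem (K.mul_mem (K.mul_mem ha hb) (K.inv_mem ha)) (K.inv_mem hb)
  refine eq_top_iff.2 fun g _ ↦ PresentedGroup.generated_by _ K (fun j ↦ ?_) g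
  fin_cases j
  exacts [ha, hb, hc]

theorem exists_eq_normal_form (g : Hgrp p t s) :
    ∃ m n q : ℤ, g = aa p t s ^ m * bb p t s ^ n * cc p t s ^ q :=
  exists_eq_zpow_mul_zpow_mul_zpow commutatorElement_aa_bb commute_cc_aa commute_cc_bb
    (closure_aa_bb ▸ Subgroup.mem_top g)

variable {G : Type*} [Group G] (g h : G)

def lift (hg : g ^ p ^ t = 1) (hh : h ^ p ^ s = 1) (hc : ⁅g, h⁆ ^ p = 1)
    (hcg : Commute ⁅g, h⁆ g) (hch : Commute ⁅g, h⁆ h) : Hgrp p t s →* G :=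
  PresentedGroup.toGroup (f := ![g, h, ⁅g, h⁆]) <| by
    intro r hr
    simp only [HRels, Set.mem_insert_iff, Set.mem_singleton_iff] at hr
    rcases hr with rfl | rfl | rfl | rfl | rfl | rfl <;>
      simp only [map_pow, map_mul, map_inv, map_commutatorElement, FreeGroup.lift_apply_of,
        Matrix.cons_val_zero, Matrix.cons_val_one, Matrix.cons_val_two, Matrix.head_cons,
        Matrix.tail_cons, commutatorElement_eq_one_iff_commute]
    exacts [hg, hh, hc, mul_inv_cancel _, hcg, hch]

variable {g h} (hg : g ^ p ^ t = 1) (hh : h ^ p ^ s = 1) (hc : ⁅g, h⁆ ^ p = 1)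
  (hcg : Commute ⁅g, h⁆ g) (hch : Commute ⁅g, h⁆ h)

@[simp]
theorem lift_aa : lift g h hg hh hc hcg hch (aa p t s) = g := PresentedGroup.toGroup.of _

@[simp]
theorem lift_bb : lift g h hg hh hc hcg hch (bb p t s) = h := PresentedGroup.toGroup.of _

end Hgrp

/-- `⟨x, y, z⟩` stands for `a ^ x * b ^ y * c ^ z`; the last coordinate of a product comes from
`b ^ y * a ^ x = a ^ x * b ^ y * c ^ (-(x * y))`. -/
@[ext]
structure HModel (p t s : ℕ) where
  x : ZMod (p ^ t)
  y : ZMod (p ^ s)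
  z : ZMod p

namespace HModel

variable {p t s : ℕ}

instance : One (HModel p t s) := ⟨⟨0, 0, 0⟩⟩

@[simp] theorem one_x : (1 : HModel p t s).x = 0 := rfl
@[simp] theorem one_y : (1 : HModel p t s).y = 0 := rfl
@[simp] theorem one_z : (1 : HModel p t s).z = 0 := rfl

variable [NeZero t] [NeZero s]

def modP (e : ℕ) [NeZero e] : ZMod (p ^ e) →+* ZMod p :=
  ZMod.castHom (dvd_pow_self p (NeZero.ne e)) (ZMod p)

instance : Mul (HModel p t s) :=
  ⟨fun u v ↦ ⟨u.x + v.x, u.y + v.y, u.z + v.z - modP s u.y * modP t v.x⟩⟩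

instance : Inv (HModel p t s) := ⟨fun u ↦ ⟨-u.x, -u.y, -u.z - modP s u.y * modP t u.x⟩⟩

@[simp] theorem mul_x (u v : HModel p t s) : (u * v).x = u.x + v.x := rfl
@[simp] theorem mul_y (u v : HModel p t s) : (u * v).y = u.y + v.y := rfl
@[simp] theorem mul_z (u v : HModel p t s) :
    (u * v).z = u.z + v.z - modP s u.y * modP t v.x := rfl
@[simp] theorem inv_x (u : HModel p t s) : u⁻¹.x = -u.x := rfl
@[simp] theorem inv_y (u : HModel p t s) : u⁻¹.y = -u.y := rfl
@[simp] theorem inv_z (u : HModel p t s) : u⁻¹.z = -u.z - modP s u.y * modP t u.x := rfl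

instance : Group (HModel p t s) where
  mul_assoc u v w := by ext <;> simp <;> ring
  one_mul u := by ext <;> simp
  mul_one u := by ext <;> simp
  inv_mul_cancel u := by ext <;> simp; ring

theorem pow_eq (u : HModel p t s) (n : ℕ) :
    u ^ n = ⟨n * u.x, n * u.y, n * u.z - n.choose 2 * (modP s u.y * modP t u.x)⟩ := by
  induction n with
  | zero => ext <;> simp
  | succ n ih =>
    rw [pow_succ, ih]
    ext <;> simp [Nat.choose_succ_succ' n 1] <;> ring

@[simp]
theorem zpow_x (u : HModel p t s) (n : ℤ) : (u ^ n).x = n * u.x := by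
  induction n using Int.induction_on with
  | zero => simp
  | succ n ih => rw [zpow_add_one, mul_x, ih]; push_cast; ring
  | pred n ih => rw [zpow_sub_one, mul_x, inv_x, ih]; push_cast; ring

@[simp]
theorem zpow_y (u : HModel p t s) (n : ℤ) : (u ^ n).y = n * u.y := by
  induction n using Int.induction_on with
  | zero => simp
  | succ n ih => rw [zpow_add_one, mul_y, ih]; push_cast; ring
  | pred n ih => rw [zpow_sub_one, mul_y, inv_y, ih]; push_cast; ring

@[simp]
theorem zpow_z_of_modP_mul_eq_zero (u : HModel p t s) (h : modP s u.y * modP t u.x = 0)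
    (n : ℤ) : (u ^ n).z = n * u.z := by
  induction n using Int.induction_on with
  | zero => simp
  | succ n ih =>
    rw [zpow_add_one, mul_z, ih, zpow_y, map_mul, map_intCast]
    push_cast
    linear_combination (-(n : ZMod p)) * h
  | pred n ih =>
    rw [zpow_sub_one, mul_z, inv_z, inv_x, zpow_y, ih, map_mul, map_neg, map_intCast]
    push_cast
    linear_combination (-(1 + n : ZMod p)) * h

@[simp] theorem commutatorElement_x (u v : HModel p t s) : ⁅u, v⁆.x = 0 := by
  simp [commutatorElement_def]

@[simp] theorem commutatorElement_y (u v : HModel p t s) : ⁅u, v⁆.y = 0 := by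
  simp [commutatorElement_def]

theorem commute_of_x_eq_zero_of_y_eq_zero {u : HModel p t s} (hx : u.x = 0) (hy : u.y = 0)
    (v : HModel p t s) : Commute u v := by
  ext <;> simp [hx, hy]; ring

theorem commutatorElement_pow_prime (u v : HModel p t s) : ⁅u, v⁆ ^ p = 1 := by
  rw [pow_eq]; ext <;> simp

theorem pow_prime_pow_eq_one (hp : p.Prime) (hodd : Odd p) {e : ℕ} (he : e ≠ 0)
    {u : HModel p t s} (hx : (p : ZMod (p ^ t)) ^ e * u.x = 0)
    (hy : (p : ZMod (p ^ s)) ^ e * u.y = 0) : u ^ p ^ e = 1 := by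
  have hchoose : (((p ^ e).choose 2 : ℕ) : ZMod p) = 0 := by
    rw [ZMod.natCast_eq_zero_iff]
    refine hp.dvd_choose_pow two_ne_zero fun h ↦ ?_
    exact Nat.not_even_iff_odd.2 (hodd.pow (n := e)) (h ▸ even_two)
  rw [pow_eq]; ext <;> simp [hx, hy, hchoose, he]

theorem orderOf_eq_prime_pow_succ [Fact p.Prime] (hodd : Odd p) {e : ℕ} {u : HModel p t s}
    (hx : (p : ZMod (p ^ t)) ^ (e + 1) * u.x = 0) (hy : (p : ZMod (p ^ s)) ^ (e + 1) * u.y = 0)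
    (hne : (p : ZMod (p ^ t)) ^ e * u.x ≠ 0 ∨ (p : ZMod (p ^ s)) ^ e * u.y ≠ 0) :
    orderOf u = p ^ (e + 1) := by
  refine orderOf_eq_prime_pow (fun h ↦ ?_) (pow_prime_pow_eq_one Fact.out hodd e.succ_ne_zero hx hy)
  have hx' := congrArg x h
  have hy' := congrArg y h
  simp only [pow_eq, one_x, one_y, Nat.cast_pow] at hx' hy'
  exact hne.elim (· hx') (· hy')

instance [NeZero p] : Finite (HModel p t s) :=
  Finite.of_injective (fun u : HModel p t s ↦ (u.x, u.y, u.z)) fun u v h ↦ by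
    simp only [Prod.mk.injEq] at h
    exact HModel.ext h.1 h.2.1 h.2.2

end HModel

namespace Hgrp

variable {p t s : ℕ}

section

variable [NeZero t] [NeZero s]

def toModel : Hgrp p t s →* HModel p t s :=
  lift ⟨1, 0, 0⟩ ⟨0, 1, 0⟩ (by rw [HModel.pow_eq]; ext <;> simp)
    (by rw [HModel.pow_eq]; ext <;> simp) (HModel.commutatorElement_pow_prime _ _)
    (HModel.commute_of_x_eq_zero_of_y_eq_zero (by simp) (by simp) _)
    (HModel.commute_of_x_eq_zero_of_y_eq_zero (by simp) (by simp) _)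

@[simp] theorem toModel_aa : toModel (aa p t s) = ⟨1, 0, 0⟩ := lift_aa ..

@[simp] theorem toModel_bb : toModel (bb p t s) = ⟨0, 1, 0⟩ := lift_bb ..

@[simp] theorem toModel_cc : toModel (cc p t s) = ⟨0, 0, 1⟩ := by
  rw [← commutatorElement_aa_bb, map_commutatorElement, toModel_aa, toModel_bb]
  ext <;> simp [commutatorElement_def]

theorem toModel_normal_form (m n q : ℤ) :
    toModel (aa p t s ^ m * bb p t s ^ n * cc p t s ^ q) = ⟨m, n, q⟩ := by
  ext <;> simp

theorem toModel_injective : Function.Injective (toModel : Hgrp p t s →* HModel p t s) := by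
  refine (injective_iff_map_eq_one _).2 fun g hg ↦ ?_
  obtain ⟨m, n, q, rfl⟩ := exists_eq_normal_form g
  rw [toModel_normal_form] at hg
  rw [zpow_eq_one_of_intCast_eq_zero aa_pow (congrArg HModel.x hg),
    zpow_eq_one_of_intCast_eq_zero bb_pow (congrArg HModel.y hg),
    zpow_eq_one_of_intCast_eq_zero cc_pow (congrArg HModel.z hg), one_mul, one_mul]

instance [NeZero p] : Finite (Hgrp p t s) := Finite.of_injective _ toModel_injective

theorem commutatorElement_pow_prime (g h : Hgrp p t s) : ⁅g, h⁆ ^ p = 1 :=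
  toModel_injective <| by
    rw [map_pow, map_commutatorElement, HModel.commutatorElement_pow_prime, map_one]

theorem commute_commutatorElement (g h k : Hgrp p t s) : Commute ⁅g, h⁆ k :=
  toModel_injective <| by
    rw [map_mul, map_mul, map_commutatorElement]
    exact (HModel.commute_of_x_eq_zero_of_y_eq_zero (HModel.commutatorElement_x _ _)
      (HModel.commutatorElement_y _ _) (toModel k)).eq

theorem exists_mulEquiv_of_closure_eq_top [NeZero p] {g h : Hgrp p t s} (hg : g ^ p ^ t = 1)
    (hh : h ^ p ^ s = 1) (hgen : Subgroup.closure {g, h} = ⊤) :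
    ∃ φ : Hgrp p t s ≃* Hgrp p t s, φ (aa p t s) = g ∧ φ (bb p t s) = h := by
  let φ := lift g h hg hh (commutatorElement_pow_prime g h) (commute_commutatorElement g h g)
    (commute_commutatorElement g h h)
  have hφa : φ (aa p t s) = g := lift_aa ..
  have hφb : φ (bb p t s) = h := lift_bb ..
  have hφ : Function.Surjective φ := by
    rw [← MonoidHom.range_eq_top, eq_top_iff, ← hgen, Subgroup.closure_le]
    rintro _ (rfl | rfl)
    exacts [⟨aa p t s, hφa⟩, ⟨bb p t s, hφb⟩]
  exact ⟨MulEquiv.ofBijective φ ⟨Finite.injective_iff_surjective.2 hφ, hφ⟩, hφa, hφb⟩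

end

variable (p t s) in
def genX (k : ℤ) : Hgrp p t s := (aa p t s)⁻¹ * bb p t s * aa p t s ^ k

variable (p t s) in
def genY (k : ℤ) : Hgrp p t s := (aa p t s)⁻¹ * genX p t s k ^ (-k)

variable (p t s) in
theorem closure_genX_genY (k : ℤ) : Subgroup.closure {genX p t s k, genY p t s k} = ⊤ := by
  set K := Subgroup.closure {genX p t s k, genY p t s k}
  have hx : genX p t s k ∈ K := Subgroup.subset_closure (by simp)
  have hy : genY p t s k ∈ K := Subgroup.subset_closure (by simp)
  have ha : aa p t s ∈ K := by
    rw [show aa p t s = genX p t s k ^ (-k) * (genY p t s k)⁻¹ by rw [genY]; group]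
    exact K.mul_mem (K.zpow_mem hx _) (K.inv_mem hy)
  have hb : bb p t s ∈ K := by
    rw [show bb p t s = aa p t s * genX p t s k * aa p t s ^ (-k) by rw [genX]; group]
    exact K.mul_mem (K.mul_mem ha hx) (K.zpow_mem ha _)
  rw [eq_top_iff, ← closure_aa_bb, Subgroup.closure_le]
  rintro _ (rfl | rfl)
  exacts [ha, hb]

section

variable [NeZero t] [NeZero s]

@[simp]
theorem toModel_genX (k : ℤ) : toModel (genX p t s k) = ⟨k - 1, 1, -k⟩ := by
  ext <;> simp [genX, neg_add_eq_sub]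

@[simp]
theorem toModel_genY_x (k : ℤ) :
    (toModel (genY p t s k)).x = -((k ^ 2 - k + 1 : ℤ) : ZMod (p ^ t)) := by
  simp [genY]; ring

@[simp]
theorem toModel_genY_y (k : ℤ) : (toModel (genY p t s k)).y = -k := by
  simp [genY]

end

theorem orderOf_genX [NeZero s] [Fact p.Prime] (hodd : Odd p) (hst : s ≤ t) {k : ℤ}
    (hk : ¬ (p : ℤ) ∣ k - 1) : orderOf (genX p (t + 1) s k) = p ^ (t + 1) := by
  rw [← orderOf_injective toModel toModel_injective, toModel_genX]
  refine HModel.orderOf_eq_prime_pow_succ hodd ?_ ?_ (Or.inl ?_) <;> dsimp only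
  · rw [ZMod.natCast_pow_eq_zero_of_le p le_rfl, zero_mul]
  · rw [ZMod.natCast_pow_eq_zero_of_le p (by omega), zero_mul]
  · simpa using ZMod.natCast_pow_mul_intCast_ne_zero (NeZero.ne p) hk t

theorem orderOf_genY [Fact p.Prime] (hodd : Odd p) (hst : s ≤ t) {k : ℤ}
    (hk₀ : ¬ (p : ℤ) ∣ k) (hk : (p : ℤ) ^ (t - s) ∣ k ^ 2 - k + 1) :
    orderOf (genY p (t + 1) (s + 1) k) = p ^ (s + 1) := by
  rw [← orderOf_injective toModel toModel_injective]
  refine HModel.orderOf_eq_prime_pow_succ hodd ?_ ?_ (Or.inr ?_)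
  · obtain ⟨d, hd⟩ := hk
    rw [toModel_genY_x, hd, Int.cast_mul, Int.cast_pow, Int.cast_natCast, mul_neg, ← mul_assoc,
      ← pow_add, show s + 1 + (t - s) = t + 1 by omega, ZMod.natCast_pow_eq_zero_of_le p le_rfl,
      zero_mul, neg_zero]
  · rw [toModel_genY_y, ZMod.natCast_pow_eq_zero_of_le p le_rfl, zero_mul]
  · simpa using ZMod.natCast_pow_mul_intCast_ne_zero (NeZero.ne p) (m := -k) (by simpa using hk₀) s

end Hgrp

theorem stmt14 (p t s : ℕ) (hp : p.Prime) (hodd : Odd p) (hs : 1 ≤ s) (hts : s < t)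
    (k : ℤ) (hku : ¬ (p : ℤ) ∣ k) (hk : (p : ℤ) ^ (t - s) ∣ k ^ 2 - k + 1) :
    orderOf ((aa p t s)⁻¹ * bb p t s * aa p t s ^ k) = p ^ t ∧
    orderOf ((aa p t s)⁻¹ * ((aa p t s)⁻¹ * bb p t s * aa p t s ^ k) ^ (-k)) = p ^ s ∧
    Subgroup.closure {(aa p t s)⁻¹ * bb p t s * aa p t s ^ k,
        (aa p t s)⁻¹ * ((aa p t s)⁻¹ * bb p t s * aa p t s ^ k) ^ (-k)} =
      (⊤ : Subgroup (Hgrp p t s)) ∧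
    ∃ φ : Hgrp p t s ≃* Hgrp p t s,
      φ (aa p t s) = (aa p t s)⁻¹ * bb p t s * aa p t s ^ k ∧
      φ (bb p t s) = (aa p t s)⁻¹ * ((aa p t s)⁻¹ * bb p t s * aa p t s ^ k) ^ (-k) := by
  obtain ⟨t, rfl⟩ : ∃ t', t = t' + 1 := ⟨t - 1, by omega⟩
  obtain ⟨s, rfl⟩ : ∃ s', s = s' + 1 := ⟨s - 1, by omega⟩
  have : Fact p.Prime := ⟨hp⟩
  have hk₁ : ¬ (p : ℤ) ∣ k - 1 :=
    not_dvd_sub_one_of_dvd_sq_sub_add_one (Nat.prime_iff_prime_int.1 hp).not_isUnit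
      ((dvd_pow_self _ (by omega)).trans hk)
  have hX := Hgrp.orderOf_genX hodd (by omega : s + 1 ≤ t) hk₁
  have hY := Hgrp.orderOf_genY hodd (by omega : s ≤ t) hku (by simpa using hk)
  have hgen := Hgrp.closure_genX_genY p (t + 1) (s + 1) k
  exact ⟨hX, hY, hgen, Hgrp.exists_mulEquiv_of_closure_eq_top (hX ▸ pow_orderOf_eq_one _)
    (hY ▸ pow_orderOf_eq_one _) hgen⟩
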